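/- For every finite abelian group G and every q ∈ G^n, the Gram matrix B_{n,q}ᵀ B_{n,q} has entries (B_{n,q}ᵀ B_{n,q})(i,i) = 6 n_{−2q_i} + 3 m_{q_i} on the diagonal and (B_{n,q}ᵀ B_{n,q})(i,j) = 6 n_{−q_i − q_j} for i ≠ j. -/

import Mathlib

open scoped Classical

noncomputable section

namespace CLPaper

open Matrix

/-- The matrix `B_n`: rows indexed by `[n]³`, columns by `[n]`;
the row of `(x₁,x₂,x₃)` is `e_{x₁} + e_{x₂} + e_{x₃}`. -/
def B (n : ℕ) : Matrix (Fin n × Fin n × Fin n) (Fin n) ℤ :=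
  fun x j => (if x.1 = j then 1 else 0) + (if x.2.1 = j then 1 else 0) +
    (if x.2.2 = j then 1 else 0)

/-- `det (B_n[K])` for an `n`-element subset `K` of `[n]³` (rows enumerated by a fixed
bijection; the quantities we consider do not depend on this choice), `0` otherwise. -/
def subdet (n : ℕ) (K : Finset (Fin n × Fin n × Fin n)) : ℤ :=
  if h : K.card = n then
    ((B n).submatrix
      (fun i : Fin n => ((K.equivFin.symm (Fin.cast h.symm i)) : Fin n × Fin n × Fin n))
      id).det
  else 0

/-- The cokernel `ℤ^n / (row span of the rows of `B_n` indexed by `K`)`. -/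
def cokK (n : ℕ) (K : Finset (Fin n × Fin n × Fin n)) : Type :=
  (Fin n → ℤ) ⧸ Submodule.span ℤ ((fun x => B n x) '' (K : Set (Fin n × Fin n × Fin n)))

instance (n : ℕ) (K : Finset (Fin n × Fin n × Fin n)) : AddCommGroup (cokK n K) :=
  inferInstanceAs (AddCommGroup ((Fin n → ℤ) ⧸ Submodule.span ℤ _))

/-- The `p`-Sylow subgroup of an abelian group: the subgroup of elements annihilated
by a power of `p`. -/
def sylow (p : ℕ) (A : Type*) [AddCommGroup A] : AddSubgroup A where
  carrier := {x | ∃ k : ℕ, p ^ k • x = 0}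
  zero_mem' := ⟨0, by simp⟩
  add_mem' := by
    rintro x y ⟨k, hk⟩ ⟨l, hl⟩
    refine ⟨k + l, ?_⟩
    rw [smul_add, pow_add, mul_comm, mul_smul, hk, smul_zero, mul_comm, mul_smul, hl,
      smul_zero, add_zero]
  neg_mem' := by
    rintro x ⟨k, hk⟩
    exact ⟨k, by rw [smul_neg, hk, neg_zero]⟩

/-- Number of surjective homomorphisms from `A` to `G`. -/
def numSur (A G : Type*) [AddCommGroup A] [AddCommGroup G] : ℕ :=
  Nat.card {f : A →+ G // Function.Surjective f}

variable {G : Type*} [AddCommGroup G] [Fintype G]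

/-- The submatrix `B_{n,q}` of `B_n` consisting of the rows indexed by
`I_q = {(x₁,x₂,x₃) : q_{x₁} + q_{x₂} + q_{x₃} = 0}`. -/
def Bq (n : ℕ) (q : Fin n → G) :
    Matrix {x : Fin n × Fin n × Fin n // q x.1 + q x.2.1 + q x.2.2 = 0} (Fin n) ℤ :=
  fun x j => B n x.1 j

/-- The Gram matrix `B_{n,q}ᵀ B_{n,q}`. -/
def gram (n : ℕ) (q : Fin n → G) : Matrix (Fin n) (Fin n) ℤ :=
  (Bq n q)ᵀ * Bq n q

/-- `n_a(q) = #{i : q_i = a}`. -/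
def cnt {n : ℕ} (q : Fin n → G) (a : G) : ℕ :=
  (Finset.univ.filter (fun i => q i = a)).card

/-- `m_a = ∑_b n_b n_{-a-b}` associated to a counts vector `n̄ : G → ℕ`. -/
def mOf (nbar : G → ℕ) (a : G) : ℕ :=
  ∑ b : G, nbar b * nbar (-a - b)

/-- The matrix `M` indexed by `G₊ = {a : n_a > 0}`, with
`M(a,a) = 2 n_a n_{-2a} + m_a` and `M(a,b) = 2 √(n_a n_b) n_{-a-b}` for `a ≠ b`. -/
def Mmat (nbar : G → ℕ) :
    Matrix {a : G // 0 < nbar a} {a : G // 0 < nbar a} ℝ :=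
  fun a b =>
    if (a : G) = (b : G) then
      2 * (nbar (a : G) : ℝ) * (nbar (-(2 • (a : G))) : ℝ) + (mOf nbar (a : G) : ℝ)
    else
      2 * Real.sqrt ((nbar (a : G) : ℝ) * (nbar (b : G) : ℝ)) * (nbar (-(a : G) - b) : ℝ)

/-- The set `S(n̄)` of vectors `q ∈ G^n` with the prescribed counts. -/
def Sset (n : ℕ) (nbar : G → ℕ) : Finset (Fin n → G) :=
  Finset.univ.filter (fun q => ∀ a : G, cnt q a = nbar a)

/-- `E(n̄) = ∑_{q ∈ S(n̄)} det(B_{n,q}ᵀ B_{n,q}) / (3^{n+1} n^{2n})`. -/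
def Eval (n : ℕ) (nbar : G → ℕ) : ℝ :=
  (∑ q ∈ Sset n nbar, ((gram n q).det : ℝ)) / ((3 : ℝ) ^ (n + 1) * (n : ℝ) ^ (2 * n))

/-- Kullback–Leibler divergence of two probability vectors on `G` (natural log;
terms with `ν a = 0` contribute `0`). -/
def klDiv (ν μ : G → ℝ) : ℝ :=
  ∑ a : G, if ν a = 0 then 0 else ν a * Real.log (ν a / μ a)

/-- `ν_{n̄}(a) = n_a / n`. -/
def nuOf (n : ℕ) (nbar : G → ℕ) : G → ℝ := fun a => (nbar a : ℝ) / n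

/-- `μ_{n̄}(a) = m_a / n²`. -/
def muOf (n : ℕ) (nbar : G → ℕ) : G → ℝ := fun a => (mOf nbar a : ℝ) / (n : ℝ) ^ 2

/-- `t_n = 2C √(|G| n log n)`. -/
def tSeq (G : Type*) [Fintype G] (C : ℝ) (n : ℕ) : ℝ :=
  2 * C * Real.sqrt ((Fintype.card G) * n * Real.log n)

/-- `r_n = 4C |G| log n`. -/
def rSeq (G : Type*) [Fintype G] (C : ℝ) (n : ℕ) : ℝ :=
  4 * C * (Fintype.card G) * Real.log n

/-- `n̄ ∈ D_n`: the counts sum to `n` and the support generates `G`. -/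
def memD (n : ℕ) (nbar : G → ℕ) : Prop :=
  (∑ a : G, nbar a = n) ∧ AddSubgroup.closure {a : G | 0 < nbar a} = ⊤

/-- `n̄ ∈ D_n'`: moreover `m_a > 0` for all `a ∈ G₊`. -/
def memD' (n : ℕ) (nbar : G → ℕ) : Prop :=
  memD n nbar ∧ ∀ a : G, 0 < nbar a → 0 < mOf nbar a

/-- `u_H(g) = 1/|H|` for `g ∈ H` and `0` otherwise. -/
def uH (H : AddSubgroup G) : G → ℝ :=
  fun g => if g ∈ H then (Nat.card H : ℝ)⁻¹ else 0

/-- `n̄ ∈ B(n,H)`. -/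
def memB (C : ℝ) (n : ℕ) (H : AddSubgroup G) (nbar : G → ℕ) : Prop :=
  memD' n nbar ∧ (∀ a : G, |(nbar a : ℝ) - n * uH H a| ≤ tSeq G C n) ∧
    (∑ a ∈ Finset.univ.filter (fun a : G => a ∉ H), (nbar a : ℝ)) ≤ rSeq G C n

end CLPaper

open CLPaper

/-! Writing the row of `x ∈ I_q` as `∑ₛ e_{xₛ}`, the entry `(i, j)` of the Gram matrix is
`∑_{s,t ∈ Fin 3} #{x ∈ I_q | xₛ = i ∧ xₜ = j}`. The condition `q x₁ + q x₂ + q x₃ = 0` is invariant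
under cyclic shifts of `x`, so each count only depends on `t - s`. For `s ≠ t` it is
`n_{-q_i-q_j}`, the free coordinate being any `k` with `q k = -q i - q j`; for `s = t` it is
`m_{q_i}` if `i = j` and `0` otherwise. Each value of `t - s` occurs for three pairs `(s, t)`. -/

namespace CLPaper

open Finset

variable {G : Type*} [AddCommGroup G] {n : ℕ}

theorem add_add_eq_zero_iff_eq_neg_sub (a b c : G) : a + b + c = 0 ↔ c = -a - b := by
  rw [add_eq_zero_iff_eq_neg', neg_add']

theorem sum_comp_eq_sum_cnt_smul {M A : Type*} [Fintype M] [AddCommMonoid A] (q : Fin n → M)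
    (f : M → A) : ∑ k, f (q k) = ∑ g, cnt q g • f g := by
  simp only [← sum_fiberwise' univ q f, sum_const, cnt]

def coord (x : Fin n × Fin n × Fin n) : Fin 3 → Fin n := ![x.1, x.2.1, x.2.2]

theorem B_apply_eq_sum_coord (x : Fin n × Fin n × Fin n) (j : Fin n) :
    B n x j = ∑ s : Fin 3, if coord x s = j then 1 else 0 := by
  rw [Fin.sum_univ_three]
  rfl

def rotateTriple : Equiv.Perm (Fin n × Fin n × Fin n) where
  toFun x := (x.2.1, x.2.2, x.1)
  invFun x := (x.2.2, x.1, x.2.1)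
  left_inv _ := rfl
  right_inv _ := rfl

theorem coord_rotateTriple (x : Fin n × Fin n × Fin n) (s : Fin 3) :
    coord (rotateTriple x) s = coord x (s + 1) := by
  fin_cases s <;> rfl

def zeroSumTriples (q : Fin n → G) : Finset (Fin n × Fin n × Fin n) :=
  {x | q x.1 + q x.2.1 + q x.2.2 = 0}

theorem rotateTriple_mem_zeroSumTriples {q : Fin n → G} {x : Fin n × Fin n × Fin n} :
    rotateTriple x ∈ zeroSumTriples q ↔ x ∈ zeroSumTriples q := by
  simp [zeroSumTriples, rotateTriple, ← add_rotate (q x.1)]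

def rowCount (q : Fin n → G) (s t : Fin 3) (i j : Fin n) : ℕ :=
  #{x ∈ zeroSumTriples q | coord x s = i ∧ coord x t = j}

theorem gram_apply_eq_sum_rowCount (q : Fin n → G) (i j : Fin n) :
    gram n q i j = ∑ s : Fin 3, ∑ t : Fin 3, (rowCount q s t i j : ℤ) := by
  have hsub : gram n q i j = ∑ x ∈ zeroSumTriples q, B n x i * B n x j :=
    (sum_subtype _ (by simp [zeroSumTriples]) fun x => B n x i * B n x j).symm
  simp only [hsub, B_apply_eq_sum_coord, sum_mul_sum, rowCount, ite_zero_mul_ite_zero,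
    mul_one, natCast_card_filter]
  rw [sum_comm]
  exact sum_congr rfl fun s _ => sum_comm

theorem rowCount_add_one (q : Fin n → G) (s t : Fin 3) (i j : Fin n) :
    rowCount q (s + 1) (t + 1) i j = rowCount q s t i j := by
  refine card_equiv rotateTriple fun x => ?_
  simp [rotateTriple_mem_zeroSumTriples, coord_rotateTriple]

theorem rowCount_add (q : Fin n → G) (s t k : Fin 3) (i j : Fin n) :
    rowCount q (s + k) (t + k) i j = rowCount q s t i j := by
  have two_eq : (2 : Fin 3) = 1 + 1 := rfl
  obtain rfl | rfl | rfl : k = 0 ∨ k = 1 ∨ k = 2 := by fin_cases k <;> simp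
  · simp
  · exact rowCount_add_one q s t i j
  · rw [two_eq, ← add_assoc, ← add_assoc, rowCount_add_one, rowCount_add_one]

theorem rowCount_eq_rowCount_zero_sub (q : Fin n → G) (s t : Fin 3) (i j : Fin n) :
    rowCount q s t i j = rowCount q 0 (t - s) i j := by
  simpa using rowCount_add q 0 (t - s) s i j

theorem rowCount_swap (q : Fin n → G) (s t : Fin 3) (i j : Fin n) :
    rowCount q s t i j = rowCount q t s j i := by
  simp only [rowCount, and_comm]

theorem rowCount_zero_one (q : Fin n → G) (i j : Fin n) :
    rowCount q 0 1 i j = cnt q (-q i - q j) := by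
  refine card_nbij' (fun x => x.2.2) (fun k => (i, j, k)) ?_ ?_ ?_ ?_ <;>
    simp +contextual [Set.MapsTo, Set.LeftInvOn, Set.RightInvOn, zeroSumTriples, coord,
      add_add_eq_zero_iff_eq_neg_sub]

theorem rowCount_zero_zero [Fintype G] (q : Fin n → G) (i j : Fin n) :
    rowCount q 0 0 i j = if i = j then mOf (cnt q) (q i) else 0 := by
  split_ifs with hij
  · subst hij
    have fibers : rowCount q 0 0 i i = ∑ k, rowCount q 0 1 i k := by
      rw [rowCount, card_eq_sum_card_fiberwise fun x _ => mem_univ (coord x 1)]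
      simp only [rowCount, filter_filter, and_self]
    rw [fibers, mOf]
    simp only [rowCount_zero_one, sum_comp_eq_sum_cnt_smul q fun g => cnt q (-q i - g),
      smul_eq_mul]
  · simp only [rowCount, card_eq_zero, filter_eq_empty_iff]
    rintro x - ⟨hi, hj⟩
    exact hij (hi.symm.trans hj)

theorem rowCount_zero_two (q : Fin n → G) (i j : Fin n) :
    rowCount q 0 2 i j = cnt q (-q i - q j) := by
  rw [rowCount_swap, rowCount_eq_rowCount_zero_sub, show (0 - 2 : Fin 3) = 1 from rfl,
    rowCount_zero_one, neg_sub_comm]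

theorem gram_apply [Fintype G] (q : Fin n → G) (i j : Fin n) :
    gram n q i j = 6 * cnt q (-q i - q j) + 3 * (if i = j then mOf (cnt q) (q i) else 0 : ℕ) := by
  have shift (s : Fin 3) : ∑ t, (rowCount q s t i j : ℤ) = ∑ t, (rowCount q 0 t i j : ℤ) :=
    (Fintype.sum_congr _ _ fun t => by rw [rowCount_eq_rowCount_zero_sub]; rfl).trans
      ((Equiv.subRight s).sum_comp fun t => (rowCount q 0 t i j : ℤ))
  simp only [gram_apply_eq_sum_rowCount, shift, sum_const, card_univ, Fintype.card_fin,
    Fin.sum_univ_three, rowCount_zero_zero, rowCount_zero_one, rowCount_zero_two]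
  push_cast
  ring

end CLPaper

/-- The entries of the Gram matrix `B_{n,q}ᵀ B_{n,q}`:
`6 n_{-2q_i} + 3 m_{q_i}` on the diagonal, and `6 n_{-q_i-q_j}` off the diagonal. -/
theorem gram_entries (G : Type*) [AddCommGroup G] [Fintype G]
    (n : ℕ) (q : Fin n → G) (i j : Fin n) :
    (i = j → gram n q i i = 6 * (cnt q (-(2 • q i)) : ℤ) + 3 * (mOf (cnt q) (q i) : ℤ)) ∧
    (i ≠ j → gram n q i j = 6 * (cnt q (-(q i) - q j) : ℤ)) := by
  refine ⟨fun _ => ?_, fun hij => ?_⟩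
  · rw [gram_apply, if_pos rfl, two_smul, neg_add']
  · rw [gram_apply, if_neg hij, Nat.cast_zero, mul_zero, add_zero]
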